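/- arXiv:2511.17169 — 2 statements merged into one kernel-verified Lean document; each statement's English description precedes it below -/
import Mathlib

section
/- Let A be a finite-dimensional semisimple algebra over a field k of characteristic 0. Then every Hochschild 2-cocycle of A with values in A is a Hochschild 2-coboundary: if y : A × A → A is bilinear and satisfies a·y(b,c) − y(a·b,c) + y(a,b·c) − y(a,b)·c = 0 for all a,b,c ∈ A, then there exists a k-linear map f : A → A with y(a,b) = a·f(b) − f(a·b) + f(a)·b for all a,b ∈ A. -/
/-!
Over a field of characteristic zero the trace form `(x, y) ↦ tr(L_{xy})` of a finite-dimensional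
semisimple algebra is nondegenerate: its radical is a left ideal, hence generated by an idempotent
`e`, and `tr(L_e) = rank L_e` forces `e = 0`. For a basis `(bᵢ)` with dual basis `(cᵢ)`,
invariance of the form gives `∑ a cᵢ ⊗ bᵢ = ∑ cᵢ ⊗ bᵢ a`, and computing `tr(L_v)` in the basis
`(cᵢ)` gives `∑ cᵢ bᵢ = 1`; so `∑ cᵢ ⊗ bᵢ` is a separability idempotent. Averaging a 2-cocycle `y`
against it, `f z = ∑ cᵢ y(bᵢ, z)` satisfies `y = δf`.
-/

open LinearMap TensorProduct Finset

section Separability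

variable (k : Type*) {A : Type*} [CommSemiring k] [Ring A] [Algebra k A] {ι : Type*} [Fintype ι]

/-- `∑ i, p i ⊗ₜ q i` is a separability idempotent of `A` over `k`. -/
structure IsSeparabilityFamily (p q : ι → A) : Prop where
  sum_mul_eq_one : ∑ i, p i * q i = 1
  sum_tmul_comm : ∀ a : A, ∑ i, (a * p i) ⊗ₜ[k] q i = ∑ i, p i ⊗ₜ[k] (q i * a)

variable {k}

namespace IsSeparabilityFamily

variable {p q : ι → A} (hpq : IsSeparabilityFamily k p q)
include hpq

theorem sum_apply_mul_comm {M : Type*} [AddCommMonoid M] [Module k M]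
    (F : A →ₗ[k] A →ₗ[k] M) (a : A) : ∑ i, F (a * p i) (q i) = ∑ i, F (p i) (q i * a) := by
  simpa using congrArg (lift F) (hpq.sum_tmul_comm a)

theorem exists_coboundary (y : A →ₗ[k] A →ₗ[k] A)
    (hy : ∀ a b c : A, a * y b c - y (a * b) c + y a (b * c) - y a b * c = 0) :
    ∃ f : A →ₗ[k] A, ∀ a b : A, y a b = a * f b - f (a * b) + f a * b := by
  have cocycle : ∀ a b c : A, a * y b c = y (a * b) c - y a (b * c) + y a b * c :=
    fun a b c => by rw [← sub_eq_zero, ← hy a b c]; abel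
  have sum_left : ∀ (r : ι → A) (z : A), ∑ i, y (r i) z = y (∑ i, r i) z := by
    simp [map_sum]
  let f : A →ₗ[k] A := ∑ i, mulLeft k (p i) ∘ₗ y (q i)
  let g : A → A := fun z => ∑ i, y (p i) (q i * z)
  let c : A := y 1 1 + ∑ i, y (p i) (q i)
  have hf : ∀ z, f z = ∑ i, p i * y (q i) z := by simp [f]
  have mul_f : ∀ a z, a * f z = y a z - g (a * z) + g a * z := by
    intro a z
    calc a * f z = ∑ i, a * p i * y (q i) z := by simp [hf, mul_sum, mul_assoc]
    _ = ∑ i, p i * y (q i * a) z :=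
      hpq.sum_apply_mul_comm ((LinearMap.mul k A).compl₂ (y.flip z)) a
    _ = ∑ i, (y (p i * (q i * a)) z - y (p i) (q i * a * z) + y (p i) (q i * a) * z) := by
      simp only [cocycle]
    _ = y a z - g (a * z) + g a * z := by
      simp only [sum_add_distrib, sum_sub_distrib, ← mul_assoc, ← sum_mul, sum_left,
        hpq.sum_mul_eq_one, one_mul, g]
  -- `f + g` is a left multiplication, which lets us trade `g` for `-f` in `mul_f`.
  have f_add_g : ∀ z, f z + g z = c * z := by
    intro z
    calc f z + g z = ∑ i, (y (p i * q i) z + y (p i) (q i) * z) := by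
          simp only [hf, g, ← sum_add_distrib, cocycle]; congr 1; ext i; abel
    _ = y 1 z + (∑ i, y (p i) (q i)) * z := by
          rw [sum_add_distrib, sum_left, hpq.sum_mul_eq_one, sum_mul]
    _ = c * z := by
          have unit_left := cocycle 1 1 z
          simp only [one_mul, sub_self, zero_add] at unit_left
          rw [unit_left, add_mul]
  refine ⟨f, fun a z => ?_⟩
  rw [mul_f, eq_sub_of_add_eq (f_add_g (a * z)), eq_sub_of_add_eq (f_add_g a)]
  noncomm_ring

end IsSeparabilityFamily

end Separability

section TraceForm

variable (k A : Type*) [Field k] [Ring A] [Algebra k A]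

noncomputable def regularTraceForm : LinearMap.BilinForm k A :=
  (LinearMap.mul k A).compr₂ (trace k A ∘ₗ LinearMap.mul k A)

variable {k A}

theorem regularTraceForm_apply (x y : A) :
    regularTraceForm k A x y = trace k A (mulLeft k (x * y)) := rfl

theorem trace_mulLeft_mul_comm (x y : A) :
    trace k A (mulLeft k (x * y)) = trace k A (mulLeft k (y * x)) := by
  rw [mulLeft_mul, mulLeft_mul]
  exact trace_mul_comm k _ _

theorem regularTraceForm_mul_left (a x y : A) :
    regularTraceForm k A (a * x) y = regularTraceForm k A x (y * a) := by
  rw [regularTraceForm_apply, regularTraceForm_apply, mul_assoc, trace_mulLeft_mul_comm,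
    mul_assoc]

theorem regularTraceForm_isSymm : (regularTraceForm k A).IsSymm :=
  ⟨fun x y => trace_mulLeft_mul_comm x y⟩

theorem regularTraceForm_nondegenerate [CharZero k] [FiniteDimensional k A] [IsSemisimpleRing A] :
    (regularTraceForm k A).Nondegenerate := by
  suffices h : (regularTraceForm k A).SeparatingLeft from
    ⟨h, fun y hy => h y fun x => by rw [regularTraceForm_isSymm.eq]; exact hy x⟩
  intro x hx
  let radical : Ideal A :=
    { carrier := {w | ∀ z, regularTraceForm k A w z = 0}
      add_mem' := fun hu hv z => by simp [hu z, hv z]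
      zero_mem' := by simp
      smul_mem' := fun a w hw z => by rw [smul_eq_mul, regularTraceForm_mul_left, hw] }
  obtain ⟨e, he, hrad⟩ := IsSemisimpleRing.ideal_eq_span_idempotent radical
  have he_mem : e ∈ radical := hrad ▸ Ideal.mem_span_singleton_self e
  have hLe : Algebra.lmul k A e = 0 := by
    refine (he.map (Algebra.lmul k A)).eq_zero_of_trace_eq_zero ?_
    have := he_mem 1
    rwa [regularTraceForm_apply, mul_one] at this
  have : e = 0 := by simpa using congrArg (· 1) hLe
  have hx_mem : x ∈ radical := hx
  simpa [hrad, this] using hx_mem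

theorem sum_regularTraceForm_dualBasis_mul_eq_one {ι : Type*} [Fintype ι] [DecidableEq ι]
    (hB : (regularTraceForm k A).Nondegenerate) (b : Module.Basis ι k A) :
    ∑ i, (regularTraceForm k A).dualBasis hB b i * b i = 1 := by
  set B := regularTraceForm k A
  set c := B.dualBasis hB b
  have hc : ∀ x i, c.repr x i = B x (b i) := B.dualBasis_repr_apply hB b
  refine sub_eq_zero.mp (hB.2 _ fun v => ?_)
  have trace_eq : trace k A (mulLeft k v) = B v (∑ i, c i * b i) := by
    calc trace k A (mulLeft k v) = ∑ i, c.repr (v * c i) i := by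
          simp only [trace_eq_matrix_trace k c, Matrix.trace, Matrix.diag, toMatrix_apply,
            mulLeft_apply]
    _ = B v (∑ i, c i * b i) := by
          simp only [hc, map_sum, B, regularTraceForm_apply, mul_assoc]
  rw [map_sub, ← trace_eq, regularTraceForm_apply, mul_one, sub_self]

theorem sum_mul_regularTraceForm_dualBasis_tmul {ι : Type*} [Fintype ι] [DecidableEq ι]
    (hB : (regularTraceForm k A).Nondegenerate) (b : Module.Basis ι k A) (a : A) :
    ∑ i, (a * (regularTraceForm k A).dualBasis hB b i) ⊗ₜ[k] b i =
      ∑ i, (regularTraceForm k A).dualBasis hB b i ⊗ₜ[k] (b i * a) := by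
  set B := regularTraceForm k A
  set c := B.dualBasis hB b
  have hc : ∀ x i, c.repr x i = B x (b i) := B.dualBasis_repr_apply hB b
  have hb : ∀ x i, b.repr x i = B (c i) x := fun x i => by
    conv_lhs => rw [← B.dualBasis_flip_dualBasis hB b]
    exact B.flip.dualBasis_repr_apply hB.flip c x i
  calc ∑ i, (a * c i) ⊗ₜ[k] b i
      = ∑ i, (∑ j, c.repr (a * c i) j • c j) ⊗ₜ[k] b i := by simp only [c.sum_repr]
    _ = ∑ j, c j ⊗ₜ[k] (∑ i, b.repr (b j * a) i • b i) := by
        simp only [hc, hb, sum_tmul, tmul_sum, smul_tmul, regularTraceForm_mul_left, B]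
        exact sum_comm
    _ = ∑ j, c j ⊗ₜ[k] (b j * a) := by simp only [b.sum_repr]

theorem isSeparabilityFamily_regularTraceForm_dualBasis {ι : Type*} [Fintype ι] [DecidableEq ι]
    (hB : (regularTraceForm k A).Nondegenerate) (b : Module.Basis ι k A) :
    IsSeparabilityFamily k ((regularTraceForm k A).dualBasis hB b) b :=
  ⟨sum_regularTraceForm_dualBasis_mul_eq_one hB b, sum_mul_regularTraceForm_dualBasis_tmul hB b⟩

end TraceForm

/-- for a finite-dimensional semisimple algebra `A` over a field `k` of
characteristic 0, every Hochschild 2-cocycle of `A` with values in `A` is a Hochschild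
2-coboundary. -/
theorem stmt_4 {k : Type*} [Field k] [CharZero k] {A : Type*} [Ring A] [Algebra k A]
    [FiniteDimensional k A] [IsSemisimpleRing A]
    (y : A →ₗ[k] A →ₗ[k] A)
    (hy : ∀ a b c : A, a * y b c - y (a * b) c + y a (b * c) - y a b * c = 0) :
    ∃ f : A →ₗ[k] A, ∀ a b : A, y a b = a * f b - f (a * b) + f a * b :=
  (isSeparabilityFamily_regularTraceForm_dualBasis regularTraceForm_nondegenerate
    (Module.finBasis k A)).exists_coboundary y hy
end

section
/- Let k be an algebraically closed field of characteristic 0 and let A = M_{r_1}(k) × ··· × M_{r_k}(k) be a product of matrix algebras with Σ_s r_s² = n. Then the space Z²(A,A) of Hochschild 2-cocycles of A with values in A has dimension n² − n + k over k. -/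
open scoped BigOperators

/-- The space `Z²(A,A)` of Hochschild 2-cocycles of `A` with values in `A`, as a
`K`-submodule of the space of bilinear maps `A × A → A`. -/
def hochschildZ2 (K A : Type*) [Field K] [Ring A] [Algebra K A] :
    Submodule K (A →ₗ[K] A →ₗ[K] A) where
  carrier := {y | ∀ a b c : A, a * y b c - y (a * b) c + y a (b * c) - y a b * c = 0}
  zero_mem' := by intro a b c; simp
  add_mem' := by
    intro y z hy hz a b c
    have h := congrArg₂ (· + ·) (hy a b c) (hz a b c)
    simp only [add_zero] at h
    simp only [LinearMap.add_apply, mul_add, add_mul]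
    rw [← h]; abel
  smul_mem' := by
    intro s y hy a b c
    simp only [LinearMap.smul_apply, Algebra.mul_smul_comm, Algebra.smul_mul_assoc,
      ← smul_sub, ← smul_add]
    rw [hy a b c, smul_zero]

/-!
A product `A` of matrix algebras is separable: `e = ∑ₛ ∑ᵢ E⁽ˢ⁾ᵢ₀ ⊗ E⁽ˢ⁾₀ᵢ` multiplies out to `1`
and commutes with the bimodule action of `A` on `A ⊗ A`. Contracting a Hochschild cocycle with `e`
gives a cochain one degree lower that bounds it, so `H¹(A,A) = H²(A,A) = 0`. Hence
`dim Z² = dim C¹ - dim Z¹ = n² - dim B¹ = n² - (n - dim Z(A))`, and the centre of a product of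
`m` matrix algebras is `Kᵐ`.
-/

open TensorProduct

section Hochschild

variable (R A : Type*) [CommRing R] [Ring A] [Algebra R A]

def hochschildD₀₁ : A →ₗ[R] A →ₗ[R] A :=
  (LinearMap.mul R A).flip - LinearMap.mul R A

@[simp] lemma hochschildD₀₁_apply (x a : A) : hochschildD₀₁ R A x a = a * x - x * a := rfl

def hochschildD₁₂ : (A →ₗ[R] A) →ₗ[R] A →ₗ[R] A →ₗ[R] A where
  toFun g := LinearMap.mk₂ R (fun a b => a * g b - g (a * b) + g a * b)
    (fun a a' b => by simp only [add_mul, map_add]; abel)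
    (fun c a b => by simp only [smul_mul_assoc, map_smul, smul_sub, smul_add])
    (fun a b b' => by simp only [mul_add, map_add]; abel)
    (fun c a b => by simp only [mul_smul_comm, map_smul, smul_sub, smul_add])
  map_add' g g' := by
    ext a b
    simp only [LinearMap.mk₂_apply, LinearMap.add_apply, mul_add, add_mul]
    abel
  map_smul' c g := by
    ext a b
    simp only [LinearMap.mk₂_apply, LinearMap.smul_apply, RingHom.id_apply,
      mul_smul_comm, smul_mul_assoc, smul_sub, smul_add]

@[simp] lemma hochschildD₁₂_apply (g : A →ₗ[R] A) (a b : A) :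
    hochschildD₁₂ R A g a b = a * g b - g (a * b) + g a * b := rfl

lemma range_hochschildD₀₁_le_ker :
    LinearMap.range (hochschildD₀₁ R A) ≤ LinearMap.ker (hochschildD₁₂ R A) := by
  rintro _ ⟨x, rfl⟩
  ext a b
  simp only [hochschildD₁₂_apply, hochschildD₀₁_apply, LinearMap.zero_apply, mul_sub, sub_mul,
    mul_assoc]
  abel

lemma ker_hochschildD₀₁ :
    LinearMap.ker (hochschildD₀₁ R A) = Subalgebra.toSubmodule (Subalgebra.center R A) := by
  ext x
  simp only [LinearMap.mem_ker, Subalgebra.mem_toSubmodule, Subalgebra.mem_center_iff,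
    LinearMap.ext_iff, hochschildD₀₁_apply, LinearMap.zero_apply, sub_eq_zero]

end Hochschild

lemma range_hochschildD₁₂_le (K A : Type*) [Field K] [Ring A] [Algebra K A] :
    LinearMap.range (hochschildD₁₂ K A) ≤ hochschildZ2 K A := by
  rintro _ ⟨g, rfl⟩ a b c
  simp only [hochschildD₁₂_apply, mul_sub, mul_add, sub_mul, add_mul, mul_assoc]
  abel

/-- `∑ j, u j ⊗ v j` is a separability idempotent of `A`. -/
structure IsSeparabilityFamily_s7 (R : Type*) {A ι : Type*} [CommRing R] [Ring A] [Algebra R A]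
    [Fintype ι] (u v : ι → A) : Prop where
  sum_mul_eq_one : ∑ j, u j * v j = 1
  sum_mul_tmul_eq (a : A) : ∑ j, (a * u j) ⊗ₜ[R] v j = ∑ j, u j ⊗ₜ[R] (v j * a)

namespace IsSeparabilityFamily_s7

section CommRing

variable {R A ι : Type*} [CommRing R] [Ring A] [Algebra R A] [Fintype ι] {u v : ι → A}

lemma sum_mul_mul_eq (h : IsSeparabilityFamily_s7 R u v) (x : A) : ∑ j, u j * (v j * x) = x := by
  simp_rw [← mul_assoc, ← Finset.sum_mul, h.sum_mul_eq_one, one_mul]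

lemma mul_sum_mul_map (h : IsSeparabilityFamily_s7 R u v) (F : A →ₗ[R] A) (a : A) :
    a * ∑ j, u j * F (v j) = ∑ j, u j * F (v j * a) := by
  have := congrArg (TensorProduct.lift ((LinearMap.mul R A).compl₂ F)) (h.sum_mul_tmul_eq a)
  simpa [map_sum, Finset.mul_sum, mul_assoc] using this

lemma ker_hochschildD₁₂_le (h : IsSeparabilityFamily_s7 R u v) :
    LinearMap.ker (hochschildD₁₂ R A) ≤ LinearMap.range (hochschildD₀₁ R A) := by
  intro g hg
  have hder (a b : A) : g (a * b) = a * g b + g a * b := by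
    have := LinearMap.congr_fun₂ hg a b
    simp only [hochschildD₁₂_apply, LinearMap.zero_apply] at this
    rw [eq_comm, ← sub_eq_zero, ← this]; abel
  refine ⟨∑ j, u j * g (v j), LinearMap.ext fun a => ?_⟩
  calc a * ∑ j, u j * g (v j) - (∑ j, u j * g (v j)) * a
      = ∑ j, u j * (g (v j * a) - g (v j) * a) := by
        rw [h.mul_sum_mul_map, Finset.sum_mul, ← Finset.sum_sub_distrib]
        simp only [mul_sub, mul_assoc]
    _ = g a := by simp only [hder, add_sub_cancel_right, h.sum_mul_mul_eq]

lemma pi {ι : Type*} [Fintype ι] [DecidableEq ι] {A : ι → Type*} [∀ i, Ring (A i)]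
    [∀ i, Algebra R (A i)] {κ : ι → Type*} [∀ i, Fintype (κ i)] {u v : ∀ i, κ i → A i}
    (h : ∀ i, IsSeparabilityFamily_s7 R (u i) (v i)) :
    IsSeparabilityFamily_s7 R (fun j : Σ i, κ i => Pi.single j.1 (u j.1 j.2))
      (fun j => Pi.single j.1 (v j.1 j.2)) where
  sum_mul_eq_one := by
    rw [Fintype.sum_sigma, ← Finset.univ_sum_single (1 : ∀ i, A i)]
    refine Finset.sum_congr rfl fun i _ => ?_
    rw [Pi.one_apply, ← (h i).sum_mul_eq_one, ← LinearMap.single_apply R, map_sum]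
    simp only [LinearMap.single_apply, Pi.single_mul]
  sum_mul_tmul_eq a := by
    rw [Fintype.sum_sigma, Fintype.sum_sigma]
    refine Finset.sum_congr rfl fun i _ => ?_
    have := congrArg (TensorProduct.map (LinearMap.single R A i) (LinearMap.single R A i))
      ((h i).sum_mul_tmul_eq (a i))
    simpa [map_sum, Pi.single_mul_right, Pi.single_mul_left] using this

end CommRing

section Field

variable {K A ι : Type*} [Field K] [Ring A] [Algebra K A] [Fintype ι] {u v : ι → A}

lemma hochschildZ2_le_range (h : IsSeparabilityFamily_s7 K u v) :
    hochschildZ2 K A ≤ LinearMap.range (hochschildD₁₂ K A) := by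
  intro f hf
  have hcocycle (a b c : A) : a * f b c = f (a * b) c - f a (b * c) + f a b * c := by
    rw [← sub_eq_zero, ← hf a b c]; abel
  set g : A →ₗ[K] A := ∑ j, LinearMap.mulLeft K (u j) ∘ₗ f (v j)
  have hg (x : A) : g x = ∑ j, u j * f (v j) x := by simp [g, LinearMap.sum_apply]
  refine ⟨g, LinearMap.ext₂ fun a b => ?_⟩
  calc a * g b - g (a * b) + g a * b
      = ∑ j, u j * (f (v j * a) b - f (v j) (a * b) + f (v j) a * b) := by
        have := h.mul_sum_mul_map (f.flip b) a
        simp only [LinearMap.flip_apply] at this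
        rw [hg, this, hg, hg, Finset.sum_mul, ← Finset.sum_sub_distrib, ← Finset.sum_add_distrib]
        simp only [mul_add, mul_sub, mul_assoc]
    _ = f a b := by simp only [← hcocycle, h.sum_mul_mul_eq]

lemma finrank_hochschildZ2_add [FiniteDimensional K A] (h : IsSeparabilityFamily_s7 K u v) :
    Module.finrank K (hochschildZ2 K A) + Module.finrank K A =
      Module.finrank K A ^ 2 + Module.finrank K (Subalgebra.center K A) := by
  have hZ2 : hochschildZ2 K A = LinearMap.range (hochschildD₁₂ K A) :=
    le_antisymm h.hochschildZ2_le_range (range_hochschildD₁₂_le K A)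
  have hH1 : LinearMap.ker (hochschildD₁₂ K A) = LinearMap.range (hochschildD₀₁ K A) :=
    le_antisymm h.ker_hochschildD₁₂_le (range_hochschildD₀₁_le_ker K A)
  have h₁ := LinearMap.finrank_range_add_finrank_ker (K := K)
    (V := A →ₗ[K] A) (V₂ := A →ₗ[K] A →ₗ[K] A) (hochschildD₁₂ K A)
  have h₀ := LinearMap.finrank_range_add_finrank_ker (K := K) (hochschildD₀₁ K A)
  rw [hH1, Module.finrank_linearMap, ← sq] at h₁
  rw [ker_hochschildD₀₁, Subalgebra.finrank_toSubmodule] at h₀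
  rw [hZ2]
  omega

end Field

end IsSeparabilityFamily_s7

lemma Matrix.isSeparabilityFamily_single {R n : Type*} [CommRing R] [Fintype n] [DecidableEq n]
    (k : n) :
    IsSeparabilityFamily_s7 R (fun i => Matrix.single i k (1 : R)) (fun i => Matrix.single k i 1) where
  sum_mul_eq_one := by simp [Matrix.single_mul_single_same, Matrix.sum_single_one]
  sum_mul_tmul_eq a := by
    induction a using Matrix.induction_on' with
    | h_zero => simp
    | h_add p q hp hq =>
      simp only [add_mul, mul_add, add_tmul, tmul_add, Finset.sum_add_distrib, hp, hq]
    | h_std_basis p q x =>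
      rw [Fintype.sum_eq_single q fun i hi => by
          rw [Matrix.single_mul_single_of_ne (h := hi.symm), zero_tmul],
        Fintype.sum_eq_single p fun i hi => by
          rw [Matrix.single_mul_single_of_ne (h := hi), tmul_zero]]
      have hx (i j : n) : Matrix.single i j x = x • Matrix.single i j 1 := by
        rw [Matrix.smul_single, smul_eq_mul, mul_one]
      simp only [Matrix.single_mul_single_same, mul_one, one_mul, hx p k, hx k q, smul_tmul]

lemma finrank_center_pi_of_isCentral {K ι : Type*} [Field K] [Fintype ι] {A : ι → Type*}
    [∀ i, Ring (A i)] [∀ i, Algebra K (A i)] [∀ i, Algebra.IsCentral K (A i)]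
    [∀ i, Nontrivial (A i)] :
    Module.finrank K (Subalgebra.center K (∀ i, A i)) = Fintype.card ι := by
  let φ : (ι → K) →ₗ[K] ∀ i, A i := LinearMap.pi fun i => Algebra.linearMap K (A i) ∘ₗ .proj i
  have hφ : Function.Injective φ := fun c c' hcc' =>
    funext fun i => (algebraMap K (A i)).injective (congrFun hcc' i)
  have hrange : LinearMap.range φ = Subalgebra.toSubmodule (Subalgebra.center K (∀ i, A i)) := by
    ext x
    simp only [LinearMap.mem_range, Subalgebra.mem_toSubmodule, Subalgebra.center_pi,
      Subalgebra.mem_pi, Set.mem_univ, true_implies, Algebra.IsCentral.center_eq_bot,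
      Algebra.mem_bot, Set.mem_range, funext_iff, φ, LinearMap.pi_apply, LinearMap.comp_apply,
      LinearMap.proj_apply, Algebra.linearMap_apply]
    exact (Classical.skolem (p := fun i c => algebraMap K (A i) c = x i)).symm
  rw [← Subalgebra.finrank_toSubmodule, ← hrange, LinearMap.finrank_range_of_inj hφ,
    Module.finrank_fintype_fun_eq_card]

theorem stmt_7_general {K : Type*} [Field K]
    {m n : ℕ} (r : Fin m → ℕ) (hr : ∀ s, 0 < r s) (hsum : ∑ s, (r s) ^ 2 = n) :
    Module.finrank K
        (hochschildZ2 K (∀ s, Matrix (Fin (r s)) (Fin (r s)) K)) = n ^ 2 - n + m := by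
  have (s : Fin m) : NeZero (r s) := ⟨(hr s).ne'⟩
  have hdim := (IsSeparabilityFamily_s7.pi fun s =>
    Matrix.isSeparabilityFamily_single (R := K) (0 : Fin (r s))).finrank_hochschildZ2_add
  have hA : Module.finrank K (∀ s, Matrix (Fin (r s)) (Fin (r s)) K) = n := by
    simp [Module.finrank_pi_fintype, Module.finrank_matrix, ← hsum, sq]
  rw [hA, finrank_center_pi_of_isCentral, Fintype.card_fin] at hdim
  have : n ≤ n ^ 2 := Nat.le_self_pow two_ne_zero n
  omega

/-- for `K` algebraically closed of characteristic 0 and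
`A = M_{r_1}(K) × ··· × M_{r_m}(K)` with `∑ s, r s ^ 2 = n`, the space `Z²(A,A)` of
Hochschild 2-cocycles of `A` with values in `A` has dimension `n² − n + m` over `K`. -/
theorem stmt_7 {K : Type*} [Field K] [IsAlgClosed K] [CharZero K]
    {m n : ℕ} (r : Fin m → ℕ) (hr : ∀ s, 0 < r s) (hsum : ∑ s, (r s) ^ 2 = n) :
    Module.finrank K
        (hochschildZ2 K (∀ s, Matrix (Fin (r s)) (Fin (r s)) K)) = n ^ 2 - n + m :=
  stmt_7_general r hr hsum
end
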